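/- arXiv:2202.11953 — 4 statements merged into one kernel-verified Lean document; each statement's English description precedes it below -/
import Mathlib

section
/- The error term in the sharp ruin asymptotics is controlled by: (π²/4)·Σ_{2 ≤ k < T/2} k² · (cos(πk/T)/cos(π/T))^{n−1} ≤ C·e^{−π²n/T²} for some constant C, for all n, T with T sufficiently large and n/T² sufficiently large. -/
/-!
On `|x| ≤ π/2` the function `cos x · exp (x²/2)` decreases (its derivative has the sign of
`x cos x - sin x`, and `x ≤ tan x`), so `cos x ≤ exp (-x²/2)`; and `cos u ≥ 1 - u²/2 ≥ exp (-u²)`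
for `|u| ≤ 1`. With `u = π/T` this gives `cos (ku) / cos u ≤ exp (-(k² - 2) u² / 2)`, and once
`n ≥ T²` the `(n - 1)`-st power of this is at most `e³ · exp (-π² n / T²) · e^{-k}`, because the
exponent `k = 2` already produces the full `exp (-π² n / T²)` and every further `k` costs a
factor `e^{-1}`. The theorem follows with `C = (π²/4) e³ ∑ k² e^{-k}`.
-/

open Real Finset

namespace Real

lemma antitoneOn_cos_mul_exp_sq_div_two :
    AntitoneOn (fun x => cos x * exp (x ^ 2 / 2)) (Set.Icc 0 (π / 2)) := by
  refine antitoneOn_of_deriv_nonpos (convex_Icc _ _) (by fun_prop) (by fun_prop) fun x hx => ?_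
  rw [interior_Icc] at hx
  have hderiv : HasDerivAt (fun x => cos x * exp (x ^ 2 / 2))
      (exp (x ^ 2 / 2) * (x * cos x - sin x)) x :=
    ((hasDerivAt_cos x).mul ((hasDerivAt_pow 2 x).div_const 2).exp).congr_deriv
      (by push_cast; ring)
  have hx_cos_le_sin : x * cos x ≤ sin x := by
    have := le_tan hx.1.le hx.2
    rwa [tan_eq_sin_div_cos, le_div_iff₀ (cos_pos_of_mem_Ioo ⟨by linarith [hx.1, pi_pos], hx.2⟩)]
      at this
  rw [hderiv.deriv]
  exact mul_nonpos_of_nonneg_of_nonpos (exp_pos _).le (by linarith)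

lemma cos_le_exp_neg_sq_div_two {x : ℝ} (hx : |x| ≤ π / 2) : cos x ≤ exp (-(x ^ 2 / 2)) := by
  have h := antitoneOn_cos_mul_exp_sq_div_two ⟨le_rfl, by positivity⟩ ⟨abs_nonneg x, hx⟩
    (abs_nonneg x)
  simp only [cos_abs, sq_abs, cos_zero, ne_eq, OfNat.ofNat_ne_zero, not_false_eq_true,
    zero_pow, zero_div, exp_zero, mul_one] at h
  rwa [exp_neg, ← one_div, le_div_iff₀ (exp_pos _)]

lemma exp_neg_sq_le_cos {x : ℝ} (hx : |x| ≤ 1) : exp (-x ^ 2) ≤ cos x := by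
  have hx2 : x ^ 2 ≤ 1 := by nlinarith [sq_abs x, abs_nonneg x]
  calc exp (-x ^ 2) = (exp (x ^ 2))⁻¹ := exp_neg _
    _ ≤ (x ^ 2 + 1)⁻¹ := inv_anti₀ (by positivity) (add_one_le_exp _)
    _ ≤ 1 - x ^ 2 / 2 := by
        rw [inv_le_iff_one_le_mul₀ (by positivity)]; nlinarith [sq_nonneg x]
    _ ≤ cos x := one_sub_sq_div_two_le_cos

lemma cos_div_cos_le_exp {x u : ℝ} (hx : |x| ≤ π / 2) (hu : |u| ≤ 1) :
    cos x / cos u ≤ exp (u ^ 2 - x ^ 2 / 2) := by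
  calc cos x / cos u ≤ exp (-(x ^ 2 / 2)) / exp (-u ^ 2) :=
        div_le_div₀ (exp_pos _).le (cos_le_exp_neg_sq_div_two hx) (exp_pos _)
          (exp_neg_sq_le_cos hu)
    _ = exp (u ^ 2 - x ^ 2 / 2) := by rw [← exp_sub]; ring_nf

end Real

lemma sq_mul_cos_ratio_pow_le {T n k : ℕ} (hT : 4 ≤ T) (hk : 2 ≤ k) (hkT : 2 * k < T)
    (hn : (T : ℝ) ^ 2 ≤ n) :
    (k : ℝ) ^ 2 * (cos (π * k / T) / cos (π / T)) ^ (n - 1)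
      ≤ exp 3 * exp (-π ^ 2 * n / T ^ 2) * ((k : ℝ) ^ 2 * exp (-1) ^ k) := by
  have hT' : (4 : ℝ) ≤ T := by exact_mod_cast hT
  have hk' : (2 : ℝ) ≤ k := by exact_mod_cast hk
  have hkT' : 2 * (k : ℝ) < T := by exact_mod_cast hkT
  have hn1' : (1 : ℝ) ≤ n := by nlinarith
  have hn1 : 1 ≤ n := by exact_mod_cast hn1'
  set u := π / T with hu_def
  have hu0 : 0 < u := by positivity
  have hu : |u| ≤ 1 := by
    rw [abs_of_pos hu0, div_le_one (by positivity)]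
    linarith [pi_lt_four]
  have hku : |k * u| ≤ π / 2 := by
    rw [abs_of_pos (by positivity), hu_def, mul_div_assoc', div_le_div_iff₀ (by positivity) two_pos]
    nlinarith [pi_pos]
  have hratio_nonneg : 0 ≤ cos (k * u) / cos u :=
    div_nonneg (cos_nonneg_of_mem_Icc (abs_le.1 hku))
      ((exp_pos _).trans_le (exp_neg_sq_le_cos hu)).le
  have hN : 1 ≤ ((n - 1 : ℕ) : ℝ) * u ^ 2 := by
    have hpi : 9 ≤ π ^ 2 := by nlinarith [pi_gt_three]
    rw [Nat.cast_sub hn1, hu_def, div_pow, mul_div_assoc', le_div_iff₀ (by positivity)]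
    push_cast
    nlinarith [mul_le_mul_of_nonneg_left hpi (sub_nonneg.2 hn1')]
  -- with `s = (n - 1) u² ≥ 1`: `-s (k² - 2) / 2 ≤ -s - (k - 2)` and `-s ≤ -π² n / T² + 1`
  have hexponent : ((n - 1 : ℕ) : ℝ) * (u ^ 2 - (k * u) ^ 2 / 2)
      ≤ -π ^ 2 * n / T ^ 2 + 3 - k := by
    have hnu : -π ^ 2 * n / T ^ 2 = -((((n - 1 : ℕ) : ℝ) + 1) * u ^ 2) := by
      rw [Nat.cast_sub hn1, hu_def]; field_simp; ring
    have hu1 : u ^ 2 ≤ 1 := by nlinarith [abs_le.1 hu]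
    rw [hnu]
    nlinarith [mul_nonneg (sub_nonneg.2 hN) (by nlinarith : (0 : ℝ) ≤ k ^ 2 - 4)]
  calc (k : ℝ) ^ 2 * (cos (π * k / T) / cos u) ^ (n - 1)
      = (k : ℝ) ^ 2 * (cos (k * u) / cos u) ^ (n - 1) := by
        rw [hu_def, mul_div_assoc', mul_comm π]
    _ ≤ (k : ℝ) ^ 2 * exp (u ^ 2 - (k * u) ^ 2 / 2) ^ (n - 1) := by
        gcongr; exact cos_div_cos_le_exp hku hu
    _ = (k : ℝ) ^ 2 * exp (((n - 1 : ℕ) : ℝ) * (u ^ 2 - (k * u) ^ 2 / 2)) := by rw [exp_nat_mul]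
    _ ≤ (k : ℝ) ^ 2 * exp (-π ^ 2 * n / T ^ 2 + 3 - k) := by gcongr
    _ = exp 3 * exp (-π ^ 2 * n / T ^ 2) * ((k : ℝ) ^ 2 * exp (-1) ^ k) := by
        rw [← exp_nat_mul, sub_eq_add_neg, exp_add, exp_add]; ring_nf

/-- The tail of the Feller ruin series is controlled by its first term:
`(π²/4) Σ_{2 ≤ k < T/2} k² (cos(πk/T)/cos(π/T))^{n−1} ≤ C e^{−π²n/T²}`
for `T` sufficiently large and `n/T²` sufficiently large. -/
theorem stmt8 : ∃ C > (0:ℝ), ∃ T₀ : ℕ, ∃ A : ℝ, ∀ T n : ℕ, T₀ ≤ T →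
    A ≤ (n : ℝ) / (T : ℝ) ^ 2 →
    π ^ 2 / 4 *
      ∑ k ∈ (Finset.range T).filter (fun k => 2 ≤ k ∧ 2 * k < T),
        (k : ℝ) ^ 2 * (Real.cos (π * k / T) / Real.cos (π / T)) ^ (n - 1)
    ≤ C * Real.exp (-π ^ 2 * n / (T : ℝ) ^ 2) := by
  have hsummable : Summable fun k : ℕ => (k : ℝ) ^ 2 * exp (-1) ^ k :=
    summable_pow_mul_geometric_of_norm_lt_one 2
      (by rw [norm_of_nonneg (exp_pos _).le, exp_lt_one_iff]; norm_num)
  set S := ∑' k : ℕ, (k : ℝ) ^ 2 * exp (-1) ^ k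
  have hS : 0 < S := hsummable.tsum_pos (fun _ => by positivity) 1 (by simp [exp_pos])
  refine ⟨π ^ 2 / 4 * exp 3 * S, by positivity, 4, 1, fun T n hT hA => ?_⟩
  have hn : (T : ℝ) ^ 2 ≤ n := by
    have hT0 : (0 : ℝ) < T := by exact_mod_cast (by omega : 0 < T)
    rwa [le_div_iff₀ (by positivity), one_mul] at hA
  calc _ ≤ π ^ 2 / 4 * ∑ k ∈ (range T).filter (fun k => 2 ≤ k ∧ 2 * k < T),
          exp 3 * exp (-π ^ 2 * n / T ^ 2) * ((k : ℝ) ^ 2 * exp (-1) ^ k) := by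
        refine mul_le_mul_of_nonneg_left (sum_le_sum fun k hk => ?_) (by positivity)
        exact sq_mul_cos_ratio_pow_le hT (mem_filter.1 hk).2.1 (mem_filter.1 hk).2.2 hn
    _ = π ^ 2 / 4 * exp 3 * exp (-π ^ 2 * n / T ^ 2) *
          ∑ k ∈ (range T).filter (fun k => 2 ≤ k ∧ 2 * k < T), (k : ℝ) ^ 2 * exp (-1) ^ k := by
        rw [← mul_sum]; ring
    _ ≤ π ^ 2 / 4 * exp 3 * exp (-π ^ 2 * n / T ^ 2) * S := by
        gcongr
        exact hsummable.sum_le_tsum _ fun _ _ => by positivity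
    _ = _ := by ring
end

section
/- For 0 < k/T ≤ ε with ε ∈ (0,1/2) small enough and T large, one has cos(πk/T)/cos(π/T) ≤ exp(−2π²(k²−1)/(5T²)). -/
/-!
Since `tan t ≥ t` on `[0, π/2)`, the function `t ↦ cos t · exp (t² / 2)` is antitone there, so
`cos x / cos y ≤ exp (-(x² - y²) / 2)` for `0 < y ≤ x < π/2`. With `x = πk/T` and `y = π/T` this
is already stronger than the claimed bound, because `x² - y² ≥ 0` and `2/5 < 1/2`.
-/

open Real Set

theorem Real.mul_cos_le_sin {t : ℝ} (h0 : 0 ≤ t) (h1 : t < π / 2) : t * cos t ≤ sin t := by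
  have hcos : 0 < cos t := cos_pos_of_mem_Ioo ⟨by linarith [pi_pos], h1⟩
  simpa [tan_eq_sin_div_cos, le_div_iff₀ hcos] using le_tan h0 h1

theorem Real.antitoneOn_cos_mul_exp_sq_div_two_s9 :
    AntitoneOn (fun t => cos t * exp (t ^ 2 / 2)) (Icc 0 (π / 2)) := by
  refine antitoneOn_of_hasDerivWithinAt_nonpos (convex_Icc 0 (π / 2)) (by fun_prop)
    (f' := fun t => (t * cos t - sin t) * exp (t ^ 2 / 2)) (fun t _ => ?_) (fun t ht => ?_)
  · have hderiv : HasDerivAt (fun t => cos t * exp (t ^ 2 / 2))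
        ((t * cos t - sin t) * exp (t ^ 2 / 2)) t := by
      refine ((hasDerivAt_cos t).mul ((hasDerivAt_pow 2 t).div_const 2).exp).congr_deriv ?_
      push_cast
      ring
    exact hderiv.hasDerivWithinAt
  · rw [interior_Icc] at ht
    exact mul_nonpos_of_nonpos_of_nonneg (by linarith [mul_cos_le_sin ht.1.le ht.2])
      (exp_pos _).le

theorem Real.cos_div_cos_le_exp_s9 {x y : ℝ} (hy : 0 < y) (hyx : y ≤ x) (hx : x < π / 2) :
    cos x / cos y ≤ exp (-(x ^ 2 - y ^ 2) / 2) := by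
  have hcos : 0 < cos y := cos_pos_of_mem_Ioo ⟨by linarith [pi_pos], by linarith⟩
  have := antitoneOn_cos_mul_exp_sq_div_two_s9 ⟨hy.le, by linarith⟩ ⟨by linarith, hx.le⟩ hyx
  rw [div_le_iff₀ hcos, neg_div, sub_div, neg_sub, exp_sub, div_mul_eq_mul_div,
    le_div_iff₀ (exp_pos _)]
  linarith

/-- Pointwise bound for the gambler's ruin series: for `ε ∈ (0,1/2)` small enough,
`T` large and `2 ≤ k` with `k/T ≤ ε`,
`cos(πk/T)/cos(π/T) ≤ exp(−2π²(k²−1)/(5T²))`. -/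
theorem stmt9 : ∃ ε : ℝ, 0 < ε ∧ ε < 1 / 2 ∧ ∃ T₀ : ℕ, ∀ T : ℕ, T₀ ≤ T →
    ∀ k : ℕ, 2 ≤ k → (k : ℝ) / (T : ℝ) ≤ ε →
    Real.cos (π * k / T) / Real.cos (π / T)
      ≤ Real.exp (-2 * π ^ 2 * ((k : ℝ) ^ 2 - 1) / (5 * (T : ℝ) ^ 2)) := by
  refine ⟨1 / 4, by norm_num, by norm_num, 1, fun T hT k hk hkT => ?_⟩
  have hT : (0 : ℝ) < T := by exact_mod_cast hT
  have hk : (1 : ℝ) ≤ k := by exact_mod_cast (by omega : 1 ≤ k)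
  have hyx : π / T ≤ π * k / T := by gcongr; exact le_mul_of_one_le_right pi_pos.le hk
  have hx : π * k / T < π / 2 := by
    rw [mul_div_assoc]
    nlinarith [pi_pos]
  have hgap : 0 ≤ π ^ 2 * ((k : ℝ) ^ 2 - 1) / T ^ 2 := by
    have : (0 : ℝ) ≤ (k : ℝ) ^ 2 - 1 := by nlinarith
    positivity
  calc cos (π * k / T) / cos (π / T)
      ≤ exp (-((π * k / T) ^ 2 - (π / T) ^ 2) / 2) := cos_div_cos_le_exp_s9 (by positivity) hyx hx
    _ = exp (-(π ^ 2 * ((k : ℝ) ^ 2 - 1) / T ^ 2) / 2) := by ring_nf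
    _ ≤ exp (-2 * π ^ 2 * ((k : ℝ) ^ 2 - 1) / (5 * T ^ 2)) := by
      rw [exp_le_exp]
      linarith [show -2 * π ^ 2 * ((k : ℝ) ^ 2 - 1) / (5 * T ^ 2)
        = -(2 / 5) * (π ^ 2 * ((k : ℝ) ^ 2 - 1) / T ^ 2) by ring]
end

section
/- Inclusion-exclusion for range endpoints: for any positive integers x, y and n ≥ 1, P_0(min_{k≤n} S_k = −x, max_{k≤n} S_k = y) = f_n(x+1, x+y+2) − f_n(x, x+y+1) − f_n(x+1, x+y+1) + f_n(x, x+y), where f_n(z,T) = P_z(exit time of (0,T) exceeds n). -/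
open Real Finset

/-- Position after `k` steps of a ±1 walk started at `z`, with steps encoded by
`s : Fin n → Bool` (`true` = `+1`, `false` = `-1`). -/
def walkPos (z : ℤ) {n : ℕ} (s : Fin n → Bool) (k : ℕ) : ℤ :=
  z + ∑ i ∈ Finset.range k, (if h : i < n then (if s ⟨i, h⟩ then (1 : ℤ) else -1) else 0)

open scoped Classical in
/-- Probability, under the uniform measure on the `2^n` step sequences of length `n`
(i.e. for the simple symmetric random walk), of an event `E`. -/
noncomputable def walkProb (n : ℕ) (E : (Fin n → Bool) → Prop) : ℝ :=
  ((Finset.univ.filter E).card : ℝ) / 2 ^ n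
/-- `fconf n z T` is the probability that the simple symmetric random walk started at `z`
stays strictly inside the strip `(0,T)` up to time `n`. -/
noncomputable def fconf (n : ℕ) (z T : ℤ) : ℝ :=
  walkProb n (fun s => ∀ m ≤ n, 0 < walkPos z s m ∧ walkPos z s m < T)


open scoped Classical

lemma walkProb_ie (n : ℕ) (PA PB PC PD PE : (Fin n → Bool) → Prop)
    (hE : ∀ s, PE s ↔ PA s ∧ ¬(PB s ∨ PC s))
    (hBA : ∀ s, PB s → PA s) (hCA : ∀ s, PC s → PA s)
    (hD : ∀ s, PD s ↔ PB s ∧ PC s) :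
    walkProb n PE = walkProb n PA - walkProb n PB - walkProb n PC + walkProb n PD := by
  unfold walkProb
  have hEeq : Finset.univ.filter PE
      = Finset.univ.filter PA \ (Finset.univ.filter PB ∪ Finset.univ.filter PC) := by
    ext s
    simp only [Finset.mem_filter, Finset.mem_sdiff, Finset.mem_union, Finset.mem_univ, true_and]
    rw [hE s]
  have hDeq : Finset.univ.filter PB ∩ Finset.univ.filter PC = Finset.univ.filter PD := by
    ext s
    simp only [Finset.mem_inter, Finset.mem_filter, Finset.mem_univ, true_and]
    rw [hD s]
  have hsub : Finset.univ.filter PB ∪ Finset.univ.filter PC ⊆ Finset.univ.filter PA := by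
    apply Finset.union_subset
    · intro s hs
      simp only [Finset.mem_filter, Finset.mem_univ, true_and] at hs ⊢
      exact hBA s hs
    · intro s hs
      simp only [Finset.mem_filter, Finset.mem_univ, true_and] at hs ⊢
      exact hCA s hs
  have e1 := Finset.card_sdiff_add_card_eq_card hsub
  have e2 := Finset.card_union_add_card_inter (Finset.univ.filter PB) (Finset.univ.filter PC)
  rw [hDeq] at e2
  have hnat : (Finset.univ.filter PE).card + (Finset.univ.filter PB).card
      + (Finset.univ.filter PC).card
      = (Finset.univ.filter PA).card + (Finset.univ.filter PD).card := by
    rw [hEeq]; omega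
  have key : ((Finset.univ.filter PE).card : ℝ)
      = ((Finset.univ.filter PA).card : ℝ) - (Finset.univ.filter PB).card
        - (Finset.univ.filter PC).card + (Finset.univ.filter PD).card := by
    have := congrArg (fun m : ℕ => (m : ℝ)) hnat
    push_cast at this
    linarith
  rw [key]
  ring

lemma walkPos_add (z : ℤ) {n : ℕ} (s : Fin n → Bool) (k : ℕ) :
    walkPos z s k = z + walkPos 0 s k := by
  simp [walkPos]

lemma fconf_eq (n : ℕ) (z T : ℤ) : fconf n z T
    = walkProb n (fun s => ∀ m ≤ n, -(z - 1) ≤ walkPos 0 s m ∧ walkPos 0 s m ≤ T - z - 1) := by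
  unfold fconf
  congr 1
  funext s
  rw [eq_iff_iff]
  constructor <;> intro h m hm <;> have := h m hm <;> rw [walkPos_add z s m] at * <;>
    constructor <;> omega


/-- Inclusion-exclusion for range endpoints: for positive integers `x, y` and `n ≥ 1`,
`P_0(min_{k≤n} S_k = −x, max_{k≤n} S_k = y)
  = f_n(x+1, x+y+2) − f_n(x, x+y+1) − f_n(x+1, x+y+1) + f_n(x, x+y)`. -/
theorem stmt14 (x y : ℕ) (hx : 1 ≤ x) (hy : 1 ≤ y) (n : ℕ) (hn : 1 ≤ n) :
    walkProb n (fun s =>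
        (∀ k ≤ n, -(x : ℤ) ≤ walkPos 0 s k ∧ walkPos 0 s k ≤ (y : ℤ)) ∧
        (∃ k ≤ n, walkPos 0 s k = -(x : ℤ)) ∧ (∃ k ≤ n, walkPos 0 s k = (y : ℤ)))
    = fconf n ((x : ℤ) + 1) ((x : ℤ) + (y : ℤ) + 2)
      - fconf n (x : ℤ) ((x : ℤ) + (y : ℤ) + 1)
      - fconf n ((x : ℤ) + 1) ((x : ℤ) + (y : ℤ) + 1)
      + fconf n (x : ℤ) ((x : ℤ) + (y : ℤ)) := by
  rw [fconf_eq, fconf_eq, fconf_eq, fconf_eq]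
  apply walkProb_ie
  · intro s
    constructor
    · rintro ⟨hw, ⟨k, hk, hke⟩, ⟨l, hl, hle⟩⟩
      refine ⟨fun m hm => ?_, ?_⟩
      · have := hw m hm; constructor <;> omega
      · rintro (h | h)
        · have := h k hk; omega
        · have := h l hl; omega
    · rintro ⟨hw, hnot⟩
      rw [not_or] at hnot
      obtain ⟨h1, h2⟩ := hnot
      push_neg at h1 h2
      obtain ⟨k, hk, hk2⟩ := h1
      obtain ⟨l, hl, hl2⟩ := h2
      have hwk := hw k hk
      have hwl := hw l hl
      exact ⟨fun m hm => by have := hw m hm; constructor <;> omega,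
        ⟨k, hk, by omega⟩, ⟨l, hl, by omega⟩⟩
  · intro s h m hm
    have := h m hm; constructor <;> omega
  · intro s h m hm
    have := h m hm; constructor <;> omega
  · intro s
    constructor
    · intro h
      constructor <;> intro m hm <;> have := h m hm <;> constructor <;> omega
    · rintro ⟨h1, h2⟩ m hm
      have := h1 m hm; have := h2 m hm; constructor <;> omega
end

section
/- Trigonometric cancellation estimate: set v = T/2 − x for 0 ≤ x ≤ T/2. Then A := cos(πv/T) − 2cos(πv/(T+1)) + cos(πv/(T+2)) satisfies |A| ≤ C·(v²/T⁴)·|cos(πv/T)| + C·(v/T³)·|sin(πv/T)| for some absolute constant C, for all integers T ≥ 3 and all real v with 0 ≤ v ≤ T/2. -/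
open Real

set_option maxHeartbeats 2000000 in
/-- Trigonometric cancellation estimate: with `v ∈ [0, T/2]`, the second difference
`A = cos(πv/T) − 2cos(πv/(T+1)) + cos(πv/(T+2))` satisfies
`|A| ≤ C (v²/T⁴) |cos(πv/T)| + C (v/T³) |sin(πv/T)|` for an absolute constant `C`. -/
theorem stmt17 : ∃ C > (0:ℝ), ∀ T : ℕ, 3 ≤ T → ∀ v : ℝ, 0 ≤ v → v ≤ (T : ℝ) / 2 →
    |Real.cos (π * v / T) - 2 * Real.cos (π * v / ((T : ℝ) + 1))
      + Real.cos (π * v / ((T : ℝ) + 2))|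
    ≤ C * (v ^ 2 / (T : ℝ) ^ 4) * |Real.cos (π * v / T)|
      + C * (v / (T : ℝ) ^ 3) * |Real.sin (π * v / T)| := by
  refine ⟨100, by norm_num, ?_⟩
  intro T hT v hv0 hv
  set t : ℝ := (T : ℝ) with htdef
  have ht3 : (3:ℝ) ≤ t := by rw [htdef]; exact_mod_cast hT
  have ht0 : (0:ℝ) < t := by linarith
  have hπ : (0:ℝ) < π := Real.pi_pos
  have hπ4 : π ≤ 4 := by have := Real.pi_lt_d2; linarith
  have hpv0 : 0 ≤ π * v := mul_nonneg hπ.le hv0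
  have hπv4 : π * v ≤ 4 * v := mul_le_mul_of_nonneg_right hπ4 hv0
  have hπv2 : (π * v) * (π * v) ≤ (4 * v) * (4 * v) :=
    mul_le_mul hπv4 hπv4 hpv0 (by positivity)
  set p : ℝ := π * v / (t * (t + 1)) with hpdef
  set q : ℝ := 2 * (π * v) / (t * (t + 2)) with hqdef
  have hb : π * v / (t + 1) = π * v / t - p := by
    rw [hpdef]; field_simp; ring
  have hc : π * v / (t + 2) = π * v / t - q := by
    rw [hqdef]; field_simp; ring
  set a : ℝ := π * v / t with hadef
  rw [hb, hc, Real.cos_sub, Real.cos_sub]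
  have hsplit : cos a - 2 * (cos a * cos p + sin a * sin p)
      + (cos a * cos q + sin a * sin q)
      = cos a * (1 - 2 * cos p + cos q) + sin a * (sin q - 2 * sin p) := by ring
  rw [hsplit]
  have hp0 : 0 ≤ p := by
    rw [hpdef]
    apply div_nonneg hpv0
    nlinarith
  have hq0 : 0 ≤ q := by
    rw [hqdef]
    apply div_nonneg (by linarith)
    nlinarith
  have hpmul : p * (t * (t + 1)) = π * v := by
    rw [hpdef]; field_simp
  have hqmul : q * (t * (t + 2)) = 2 * (π * v) := by
    rw [hqdef]; field_simp
  -- multiplied-out bounds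
  have hpt : p * t ^ 2 ≤ π * v := by
    nlinarith [mul_nonneg hp0 ht0.le]
  have hqt : q * t ^ 2 ≤ 2 * (π * v) := by
    nlinarith [mul_nonneg hq0 ht0.le]
  set R : ℝ := q - 2 * p with hRdef
  have hRmul : R * (t * (t + 1) * (t + 2)) = -(2 * (π * v)) := by
    rw [hRdef, hpdef, hqdef]; field_simp; ring
  have hR0 : R ≤ 0 := by
    by_contra h
    push_neg at h
    have hprodpos : (0:ℝ) < t * (t + 1) * (t + 2) :=
      mul_pos (mul_pos ht0 (by linarith)) (by linarith)
    linarith [mul_pos h hprodpos, hRmul]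
  have hRabs : |R| = -R := abs_of_nonpos hR0
  have hRt : |R| * t ^ 3 ≤ 2 * (π * v) := by
    rw [hRabs]
    have hnR : 0 ≤ -R := by linarith
    have h1 : 0 ≤ (-R) * t ^ 2 := mul_nonneg hnR (sq_nonneg t)
    have h2 : 0 ≤ (-R) * t := mul_nonneg hnR ht0.le
    linarith [hRmul, h1, h2]
  -- cosine coefficient estimate : |1 - 2 cos p + cos q| ≤ 100 v²/t⁴
  have hE1 : |1 - 2 * cos p + cos q| ≤ 100 * (v ^ 2 / t ^ 4) := by
    rw [show (100:ℝ) * (v ^ 2 / t ^ 4) = 100 * v ^ 2 / t ^ 4 by ring,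
      le_div_iff₀ (by positivity : (0:ℝ) < t ^ 4)]
    have hsplit1 : 1 - 2 * cos p + cos q
        = (cos q - cos (2 * p)) + 2 * cos p * (cos p - 1) := by
      rw [Real.cos_two_mul]; ring
    rw [hsplit1]
    -- first piece
    have hs1 : |sin ((q + 2 * p) / 2)| * t ^ 2 ≤ 2 * (π * v) := by
      have h := Real.abs_sin_le_abs (x := (q + 2 * p) / 2)
      rw [abs_of_nonneg (by linarith : (0:ℝ) ≤ (q + 2 * p) / 2)] at h
      have hmm := mul_le_mul_of_nonneg_right h (sq_nonneg t)
      have he : (q + 2 * p) / 2 * t ^ 2 = q * t ^ 2 / 2 + p * t ^ 2 := by ring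
      rw [he] at hmm
      linarith
    have hs2 : |sin ((q - 2 * p) / 2)| * t ^ 3 ≤ π * v := by
      have h := Real.abs_sin_le_abs (x := (q - 2 * p) / 2)
      have h2 : |(q - 2 * p) / 2| = |R| / 2 := by
        rw [hRdef, abs_div]; norm_num
      rw [h2] at h
      have hmm := mul_le_mul_of_nonneg_right h (pow_pos ht0 3).le
      have he : |R| / 2 * t ^ 3 = (|R| * t ^ 3) / 2 := by ring
      rw [he] at hmm
      linarith
    have hc1 : |cos q - cos (2 * p)| * t ^ 5 ≤ 4 * (π * v) * (π * v) := by
      rw [Real.cos_sub_cos]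
      have habs : |(-2) * sin ((q + 2 * p) / 2) * sin ((q - 2 * p) / 2)|
          = 2 * (|sin ((q + 2 * p) / 2)| * |sin ((q - 2 * p) / 2)|) := by
        rw [abs_mul, abs_mul]
        norm_num
        ring
      rw [habs]
      have hprod := mul_le_mul hs1 hs2 (mul_nonneg (abs_nonneg _) (pow_pos ht0 3).le)
        (by positivity)
      have he : 2 * (|sin ((q + 2 * p) / 2)| * |sin ((q - 2 * p) / 2)|) * t ^ 5
          = 2 * ((|sin ((q + 2 * p) / 2)| * t ^ 2) * (|sin ((q - 2 * p) / 2)| * t ^ 3)) := by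
        ring
      rw [he]
      linarith
    -- second piece
    have hc2 : |2 * cos p * (cos p - 1)| * t ^ 4 ≤ (π * v) * (π * v) := by
      have hle1 : cos p ≤ 1 := Real.cos_le_one p
      have hle2 : 1 - p ^ 2 / 2 ≤ cos p := Real.one_sub_sq_div_two_le_cos
      have habs1 : |cos p| ≤ 1 := Real.abs_cos_le_one p
      have hcd : |cos p - 1| ≤ p ^ 2 / 2 := by
        rw [abs_sub_comm, abs_of_nonneg (by linarith)]; linarith
      have hbound : |2 * cos p * (cos p - 1)| ≤ p ^ 2 := by
        rw [abs_mul, abs_mul, abs_of_nonneg (by norm_num : (0:ℝ) ≤ 2)]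
        have := mul_le_mul habs1 hcd (abs_nonneg _) (by norm_num)
        nlinarith [abs_nonneg (cos p - 1), abs_nonneg (cos p)]
      have hsq := mul_le_mul hpt hpt (mul_nonneg hp0 (sq_nonneg t)) hpv0
      have hmm := mul_le_mul_of_nonneg_right hbound (by positivity : (0:ℝ) ≤ t ^ 4)
      have he : p ^ 2 * t ^ 4 = (p * t ^ 2) * (p * t ^ 2) := by ring
      rw [he] at hmm
      linarith
    -- divide the first piece by one power of t
    have hc1' : |cos q - cos (2 * p)| * t ^ 4 ≤ 44 * v ^ 2 := by
      have hX0 : 0 ≤ |cos q - cos (2 * p)| * t ^ 4 :=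
        mul_nonneg (abs_nonneg _) (by positivity)
      have h3 := mul_nonneg hX0 (by linarith : (0:ℝ) ≤ t - 3)
      have he : |cos q - cos (2 * p)| * t ^ 4 * (t - 3)
          = |cos q - cos (2 * p)| * t ^ 5 - 3 * (|cos q - cos (2 * p)| * t ^ 4) := by
        ring
      rw [he] at h3
      -- 3 X ≤ |c1| t^5 ≤ 4 (πv)² ≤ 64 v²
      linarith [hπv2]
    calc |(cos q - cos (2 * p)) + 2 * cos p * (cos p - 1)| * t ^ 4
        ≤ (|cos q - cos (2 * p)| + |2 * cos p * (cos p - 1)|) * t ^ 4 := by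
          gcongr
          exact abs_add_le _ _
      _ = |cos q - cos (2 * p)| * t ^ 4 + |2 * cos p * (cos p - 1)| * t ^ 4 := by ring
      _ ≤ 44 * v ^ 2 + 16 * v ^ 2 := by
          refine add_le_add hc1' ?_
          have : (π * v) * (π * v) ≤ 16 * v ^ 2 := by nlinarith [hπv2]
          linarith [hc2]
      _ ≤ 100 * v ^ 2 := by nlinarith [sq_nonneg v]
  -- sine coefficient estimate : |sin q - 2 sin p| ≤ 100 v/t³
  have hE2 : |sin q - 2 * sin p| ≤ 100 * (v / t ^ 3) := by
    rw [show (100:ℝ) * (v / t ^ 3) = 100 * v / t ^ 3 by ring,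
      le_div_iff₀ (by positivity : (0:ℝ) < t ^ 3)]
    have hsplit2 : sin q - 2 * sin p
        = (sin q - sin (2 * p)) + 2 * sin p * (cos p - 1) := by
      rw [Real.sin_two_mul]; ring
    rw [hsplit2]
    have hd1 : |sin q - sin (2 * p)| * t ^ 3 ≤ 8 * v := by
      rw [Real.sin_sub_sin]
      have habs : |2 * sin ((q - 2 * p) / 2) * cos ((q + 2 * p) / 2)|
          ≤ |R| := by
        rw [abs_mul, abs_mul, abs_of_nonneg (by norm_num : (0:ℝ) ≤ 2)]
        have hsin : |sin ((q - 2 * p) / 2)| ≤ |R| / 2 := by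
          have h := Real.abs_sin_le_abs (x := (q - 2 * p) / 2)
          have h2 : |(q - 2 * p) / 2| = |R| / 2 := by
            rw [hRdef, abs_div]; norm_num
          rw [h2] at h; exact h
        have hcos : |cos ((q + 2 * p) / 2)| ≤ 1 := Real.abs_cos_le_one _
        have := mul_le_mul hsin hcos (abs_nonneg _) (by positivity)
        linarith [this]
      have hmm := mul_le_mul_of_nonneg_right habs (pow_pos ht0 3).le
      linarith [hRt, hπv4]
    have hd2 : |2 * sin p * (cos p - 1)| * t ^ 3 ≤ 6 * v := by
      have hle2 : 1 - p ^ 2 / 2 ≤ cos p := Real.one_sub_sq_div_two_le_cos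
      have hle1 : cos p ≤ 1 := Real.cos_le_one p
      have hsle : |sin p| ≤ p := by
        have h := Real.abs_sin_le_abs (x := p)
        rwa [abs_of_nonneg hp0] at h
      have hcd : |cos p - 1| ≤ p ^ 2 / 2 := by
        rw [abs_sub_comm, abs_of_nonneg (by linarith)]; linarith
      have hbound : |2 * sin p * (cos p - 1)| ≤ p ^ 3 := by
        rw [abs_mul, abs_mul, abs_of_nonneg (by norm_num : (0:ℝ) ≤ 2)]
        have := mul_le_mul hsle hcd (abs_nonneg _) hp0
        nlinarith [this]
      -- p³ t⁶ ≤ (π v)³ ≤ 64 v³ ≤ 16 v t²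
      have hcube : p ^ 3 * t ^ 6 ≤ 16 * v * t ^ 2 := by
        have h1 : p ^ 3 * t ^ 6 ≤ (π * v) * (π * v) * (π * v) := by
          have := mul_le_mul (mul_le_mul hpt hpt (mul_nonneg hp0 (sq_nonneg t)) hpv0) hpt
            (mul_nonneg hp0 (sq_nonneg t)) (mul_nonneg hpv0 hpv0)
          nlinarith [this]
        have h2 : (π * v) * (π * v) * (π * v) ≤ 64 * (v * v * v) := by
          have := mul_le_mul hπv2 hπv4 hpv0 (by positivity : (0:ℝ) ≤ 4 * v * (4 * v))
          nlinarith [this]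
        have ht2v : (0:ℝ) ≤ t - 2 * v := by linarith
        have h3 : 64 * (v * v * v) ≤ 16 * v * t ^ 2 := by
          have := mul_nonneg (mul_nonneg hv0 ht2v) (by linarith : (0:ℝ) ≤ t + 2 * v)
          nlinarith [this]
        linarith
      -- divide by t³ : p³ t³ ≤ 6 v
      have hpt3 : p ^ 3 * t ^ 3 ≤ 6 * v := by
        have hX0 : 0 ≤ p ^ 3 * t ^ 2 := by positivity
        have hstep := mul_nonneg (mul_nonneg hX0 (sq_nonneg t)) (by linarith : (0:ℝ) ≤ t - 3)
        -- p³ t⁴ (t-3) ≥ 0 : p³ t⁵ ≥ 3 p³ t⁴... need t³·t³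
        have hY0 : 0 ≤ p ^ 3 * t ^ 3 * t ^ 2 := by positivity
        have h3 := mul_nonneg hY0 (by linarith : (0:ℝ) ≤ t - 3)
        -- gives p³ t⁶ ≥ 3 p³ t⁵ ; iterate: easier to just clear with t²
        -- From hcube : p³ t³ · t³ ≤ 16 v t² , so (p³ t³ · 3 - 16 v) t² ≤ p³ t³ t³ - 16 v t² ≤ 0
        have hZ := mul_nonneg (mul_nonneg (by positivity : (0:ℝ) ≤ p ^ 3 * t ^ 3)
          (sq_nonneg t)) (by linarith : (0:ℝ) ≤ t - 3)
        have key : (p ^ 3 * t ^ 3 * 3) * t ^ 2 ≤ (16 * v) * t ^ 2 := by nlinarith [hcube, hZ]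
        have := le_of_mul_le_mul_right key (by positivity : (0:ℝ) < t ^ 2)
        linarith
      have hmm := mul_le_mul_of_nonneg_right hbound (pow_pos ht0 3).le
      linarith
    calc |(sin q - sin (2 * p)) + 2 * sin p * (cos p - 1)| * t ^ 3
        ≤ (|sin q - sin (2 * p)| + |2 * sin p * (cos p - 1)|) * t ^ 3 := by
          gcongr
          exact abs_add_le _ _
      _ = |sin q - sin (2 * p)| * t ^ 3 + |2 * sin p * (cos p - 1)| * t ^ 3 := by ring
      _ ≤ 8 * v + 6 * v := add_le_add hd1 hd2
      _ ≤ 100 * v := by linarith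
  calc |cos a * (1 - 2 * cos p + cos q) + sin a * (sin q - 2 * sin p)|
      ≤ |cos a| * |1 - 2 * cos p + cos q| + |sin a| * |sin q - 2 * sin p| := by
        refine (abs_add_le _ _).trans ?_
        rw [abs_mul, abs_mul]
    _ ≤ |cos a| * (100 * (v ^ 2 / t ^ 4)) + |sin a| * (100 * (v / t ^ 3)) := by
        exact add_le_add (mul_le_mul_of_nonneg_left hE1 (abs_nonneg _))
          (mul_le_mul_of_nonneg_left hE2 (abs_nonneg _))
    _ = 100 * (v ^ 2 / t ^ 4) * |cos a| + 100 * (v / t ^ 3) * |sin a| := by ring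
end
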